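/- arXiv:1611.02752 — 7 statements merged into one kernel-verified Lean document; each statement's English description precedes it below -/
import Mathlib

section
/- Let S ∈ GL(n, ℝ) with rows r_1,…,r_n, and fix i. Set R_i = diag(r_i). Then S R_i S^{-1} ≥ 0 entrywise if and only if the Hadamard product r_i ∘ r_j lies in the row cone rc(S) for every j ∈ {1,…,n}. -/
open Matrix

/-- The row cone of `S`: all nonnegative linear combinations of rows of `S`. -/
def rowCone {n : ℕ} (S : Matrix (Fin n) (Fin n) ℝ) : Set (Fin n → ℝ) :=
  {x | ∃ y : Fin n → ℝ, 0 ≤ y ∧ x = Matrix.vecMul y S}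

/-- The spectracone of `S`: vectors `x` with `S diag(x) S⁻¹` entrywise nonnegative. -/
def spectraCone {n : ℕ} (S : Matrix (Fin n) (Fin n) ℝ) : Set (Fin n → ℝ) :=
  {x | ∀ i j, 0 ≤ (S * Matrix.diagonal x * S⁻¹) i j}

/-- `S` is row Hadamard conic: Hadamard products of pairs of rows lie in the row cone. -/
def RHC {n : ℕ} (S : Matrix (Fin n) (Fin n) ℝ) : Prop :=
  ∀ i j, (fun k => S i k * S j k) ∈ rowCone S

theorem stmt2 {n : ℕ} (S : Matrix (Fin n) (Fin n) ℝ) (hS : IsUnit S) (i : Fin n) :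
    (∀ a b, 0 ≤ (S * Matrix.diagonal (S i) * S⁻¹) a b) ↔
      ∀ j, (fun k => S i k * S j k) ∈ rowCone S := by
  have hdet : IsUnit S.det := (Matrix.isUnit_iff_isUnit_det S).mp hS
  have hinv : S⁻¹ * S = 1 := Matrix.nonsing_inv_mul S hdet
  have hinv' : S * S⁻¹ = 1 := Matrix.mul_nonsing_inv S hdet
  constructor
  · intro h j
    refine ⟨fun l => (S * Matrix.diagonal (S i) * S⁻¹) j l, fun l => h j l, ?_⟩
    funext k
    have : (S * Matrix.diagonal (S i) * S⁻¹) * S = S * Matrix.diagonal (S i) := by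
      rw [Matrix.mul_assoc, hinv, Matrix.mul_one]
    have h2 := congrFun (congrFun this j) k
    rw [Matrix.mul_diagonal] at h2
    rw [mul_comm, ← h2]
    simp [Matrix.vecMul, dotProduct, Matrix.mul_apply]
  · intro h a b
    choose y hy hyeq using h
    have key : (Matrix.of fun j l => y j l) * S = S * Matrix.diagonal (S i) := by
      ext j k
      have := congrFun (hyeq j) k
      simp only [Matrix.vecMul, dotProduct] at this
      rw [Matrix.mul_diagonal, mul_comm, this]
      simp [Matrix.mul_apply, Matrix.of_apply]
    have : S * Matrix.diagonal (S i) * S⁻¹ = Matrix.of fun j l => y j l := by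
      rw [← key, Matrix.mul_assoc, hinv', Matrix.mul_one]
    rw [this]
    exact hy a b
end

section
/- If S ∈ GL(n, ℝ) is row Hadamard conic (every pairwise Hadamard product of rows lies in the row cone of S), then the Hadamard product of any finite nonempty family of rows of S (with repetitions allowed) also lies in the row cone of S. -/
open Matrix

lemma rowCone_mul_row {n : ℕ} (S : Matrix (Fin n) (Fin n) ℝ) (hRHC : RHC S)
    (i : Fin n) {x : Fin n → ℝ} (hx : x ∈ rowCone S) :
    (fun k => S i k * x k) ∈ rowCone S := by
  obtain ⟨y, hy, rfl⟩ := hx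
  choose z hz hzeq using hRHC i
  refine ⟨fun m => ∑ j, y j * z j m, fun m =>
    Finset.sum_nonneg fun j _ => mul_nonneg (hy j) (hz j m), ?_⟩
  funext k
  have h1 : ∀ j, S i k * S j k = ∑ m, z j m * S m k := fun j => by
    have := congrFun (hzeq j) k
    simpa [Matrix.vecMul, dotProduct] using this
  have h2 : (Matrix.vecMul y S) k = ∑ j, y j * S j k := by
    simp [Matrix.vecMul, dotProduct]
  show S i k * (Matrix.vecMul y S) k = _
  rw [h2]
  simp only [Matrix.vecMul, dotProduct]
  calc S i k * ∑ j, y j * S j k = ∑ j, y j * (S i k * S j k) := by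
        rw [Finset.mul_sum]; exact Finset.sum_congr rfl fun j _ => by ring
    _ = ∑ j, ∑ m, y j * (z j m * S m k) := by
        refine Finset.sum_congr rfl fun j _ => ?_
        rw [h1 j, Finset.mul_sum]
    _ = ∑ m, (∑ j, y j * z j m) * S m k := by
        rw [Finset.sum_comm]
        refine Finset.sum_congr rfl fun m _ => ?_
        rw [Finset.sum_mul]
        exact Finset.sum_congr rfl fun j _ => by ring

theorem stmt3 {n : ℕ} (S : Matrix (Fin n) (Fin n) ℝ) (hS : IsUnit S)
    (hRHC : RHC S) (l : List (Fin n)) (hl : l ≠ []) :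
    (fun k => (l.map (fun i => S i k)).prod) ∈ rowCone S := by
  clear hS
  induction l with
  | nil => exact absurd rfl hl
  | cons a t ih =>
    rcases eq_or_ne t [] with rfl | ht
    · refine ⟨fun m => if m = a then 1 else 0, fun m => by positivity, ?_⟩
      funext k
      simp [Matrix.vecMul, dotProduct, ite_mul, Finset.sum_ite_eq']
    · have hx := ih ht
      have : (fun k => ((a :: t).map (fun i => S i k)).prod)
          = fun k => S a k * (t.map (fun i => S i k)).prod := by
        funext k; simp
      rw [this]
      exact rowCone_mul_row S hRHC a hx
end

section
/- Let S ∈ GL(n, ℝ). Then the row cone rc(S) is contained in the spectracone C(S) if and only if S is row Hadamard conic. -/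
open Matrix

theorem stmt12 {n : ℕ} (S : Matrix (Fin n) (Fin n) ℝ) (hS : IsUnit S) :
    rowCone S ⊆ spectraCone S ↔ RHC S := by
  have hdet : IsUnit S.det := (Matrix.isUnit_iff_isUnit_det S).mp hS
  have hSS : S⁻¹ * S = 1 := Matrix.nonsing_inv_mul S hdet
  have hSS' : S * S⁻¹ = 1 := Matrix.mul_nonsing_inv S hdet
  have key : ∀ (x : Fin n → ℝ) i j,
      (S * Matrix.diagonal x * S⁻¹) i j = ∑ k, S i k * x k * S⁻¹ k j := by
    intro x i j
    simp only [Matrix.mul_apply, Matrix.diagonal_apply, mul_ite, mul_zero, ite_mul, zero_mul,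
      Finset.sum_ite_eq, Finset.sum_ite_eq', Finset.mem_univ, if_true]
  constructor
  · intro h i l
    have hrow : S l ∈ rowCone S := by
      refine ⟨Pi.single l 1, ?_, ?_⟩
      · intro k
        by_cases hk : k = l <;> simp [Pi.single_apply, hk]
      · funext k
        simp [Matrix.vecMul, dotProduct, Pi.single_apply, Finset.sum_ite_eq]
    have hsp := h hrow
    refine ⟨Matrix.vecMul (fun k => S i k * S l k) S⁻¹, ?_, ?_⟩
    · intro j
      have h2 := hsp i j
      rw [key] at h2
      simpa [Matrix.vecMul, dotProduct, mul_assoc] using h2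
    · have : Matrix.vecMul (Matrix.vecMul (fun k => S i k * S l k) S⁻¹) S
          = fun k => S i k * S l k := by
        rw [Matrix.vecMul_vecMul, hSS, Matrix.vecMul_one]
      exact this.symm
  · intro h x hx i j
    obtain ⟨y, hy, rfl⟩ := hx
    rw [key]
    have e1 : ∀ k, Matrix.vecMul y S k = ∑ l, y l * S l k := by
      intro k; simp [Matrix.vecMul, dotProduct]
    have main : (∑ k, S i k * Matrix.vecMul y S k * S⁻¹ k j)
        = ∑ l, y l * ∑ k, S i k * S l k * S⁻¹ k j := by
      simp only [e1, Finset.mul_sum, Finset.sum_mul]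
      rw [Finset.sum_comm]
      apply Finset.sum_congr rfl
      intro l _
      apply Finset.sum_congr rfl
      intro k _
      ring
    rw [main]
    apply Finset.sum_nonneg
    intro l _
    obtain ⟨z, hz, hzeq⟩ := h i l
    have inner : (∑ k, S i k * S l k * S⁻¹ k j) = z j := by
      have : (fun k => S i k * S l k) = Matrix.vecMul z S := hzeq
      calc (∑ k, S i k * S l k * S⁻¹ k j)
          = Matrix.vecMul (Matrix.vecMul z S) S⁻¹ j := by
            rw [← this]; simp [Matrix.vecMul, dotProduct]
        _ = z j := by rw [Matrix.vecMul_vecMul, hSS', Matrix.vecMul_one]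
    rw [inner]
    exact mul_nonneg (hy l) (hz j)
end

section
/- Let S ∈ GL(n, ℝ). If some row of S equals the all-ones vector e^T, then the spectracone C(S) is contained in the row cone rc(S). -/
open Matrix

theorem stmt13 {n : ℕ} (S : Matrix (Fin n) (Fin n) ℝ) (hS : IsUnit S)
    (h : ∃ i, S i = fun _ => (1:ℝ)) :
    spectraCone S ⊆ rowCone S := by
  obtain ⟨i, hi⟩ := h
  intro x hx
  refine ⟨(S * Matrix.diagonal x * S⁻¹) i, fun k => hx i k, ?_⟩
  have hinv : S⁻¹ * S = 1 := nonsing_inv_mul S (isUnit_iff_isUnit_det S |>.mp hS)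
  funext j
  have : Matrix.vecMul ((S * Matrix.diagonal x * S⁻¹) i) S
      = (S * Matrix.diagonal x * S⁻¹ * S) i := by
    funext j
    simp [Matrix.vecMul, Matrix.mul_apply, dotProduct]
  rw [this, Matrix.mul_assoc (S * Matrix.diagonal x), hinv, Matrix.mul_one]
  simp [Matrix.mul_apply, Matrix.diagonal, hi]
end

section
/- Let S ∈ GL(n, ℝ) and suppose the i-th row r_i of S has all entries nonzero. Then C(S) ⊆ rc(S diag(r_i)^{-1}), where rc denotes the conical hull of the rows. -/
open Matrix

theorem stmt15 {n : ℕ} (S : Matrix (Fin n) (Fin n) ℝ) (hS : IsUnit S)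
    (i : Fin n) (hi : ∀ k, S i k ≠ 0) :
    spectraCone S ⊆ rowCone (S * (Matrix.diagonal (S i))⁻¹) := by
  intro x hx
  refine ⟨fun j => (S * Matrix.diagonal x * S⁻¹) i j, fun j => hx i j, ?_⟩
  have hdet : IsUnit S.det := (Matrix.isUnit_iff_isUnit_det S).mp hS
  have hAS : (S * Matrix.diagonal x * S⁻¹) * S = S * Matrix.diagonal x := by
    rw [Matrix.mul_assoc, Matrix.nonsing_inv_mul S hdet, Matrix.mul_one]
  have hdiag : (Matrix.diagonal (S i))⁻¹ = Matrix.diagonal (fun k => (S i k)⁻¹) := by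
    apply Matrix.inv_eq_left_inv
    rw [Matrix.diagonal_mul_diagonal,
      show (fun k => (S i k)⁻¹ * S i k) = fun _ => (1:ℝ) from
        funext fun k => inv_mul_cancel₀ (hi k), Matrix.diagonal_one]
  have hy : Matrix.vecMul (fun j => (S * Matrix.diagonal x * S⁻¹) i j) S
      = (S * Matrix.diagonal x * S⁻¹ * S) i := by
    funext k
    simp [Matrix.vecMul, Matrix.mul_apply, dotProduct]
  rw [hdiag, ← Matrix.vecMul_vecMul, hy, hAS]
  funext k
  rw [Matrix.vecMul_diagonal, Matrix.mul_diagonal]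
  rw [mul_comm (S i k) (x k), mul_inv_cancel_right₀ (hi k)]
end

section
/- Let S ∈ GL(n, ℝ) and suppose some row of S equals the all-ones vector. Then C(S) = rc(S) if and only if S is row Hadamard conic. -/
open Matrix

lemma mem_spectraCone_iff {n : ℕ} (S : Matrix (Fin n) (Fin n) ℝ) (hS : IsUnit S)
    (x : Fin n → ℝ) :
    x ∈ spectraCone S ↔ ∀ i, (fun k => x k * S i k) ∈ rowCone S := by
  have hdet : IsUnit S.det := (Matrix.isUnit_iff_isUnit_det S).mp hS
  have h1 : S * S⁻¹ = 1 := Matrix.mul_nonsing_inv S hdet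
  have h2 : S⁻¹ * S = 1 := Matrix.nonsing_inv_mul S hdet
  have hMS : (S * Matrix.diagonal x * S⁻¹) * S = S * Matrix.diagonal x := by
    rw [Matrix.mul_assoc, h2, Matrix.mul_one]
  constructor
  · intro hx i
    refine ⟨fun j => (S * Matrix.diagonal x * S⁻¹) i j, fun j => hx i j, ?_⟩
    funext k
    have : ((S * Matrix.diagonal x * S⁻¹) * S) i k = (S * Matrix.diagonal x) i k := by
      rw [hMS]
    rw [Matrix.mul_apply] at this
    simp only [Matrix.mul_diagonal] at this
    simp only [Matrix.vecMul, dotProduct]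
    rw [mul_comm (x k) (S i k), ← this]
  · intro hx
    choose y hy hxy using hx
    have hMSx : (Matrix.of y) * S = S * Matrix.diagonal x := by
      ext i k
      rw [Matrix.mul_apply]
      have := congrFun (hxy i) k
      simp only [Matrix.vecMul, dotProduct] at this
      simp only [Matrix.mul_diagonal]
      rw [mul_comm (S i k) (x k), this]
      rfl
    have hM : S * Matrix.diagonal x * S⁻¹ = Matrix.of y := by
      rw [← hMSx, Matrix.mul_assoc, h1, Matrix.mul_one]
    intro i j
    rw [hM]
    exact hy i j

theorem stmt16 {n : ℕ} (S : Matrix (Fin n) (Fin n) ℝ) (hS : IsUnit S)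
    (h : ∃ i, S i = fun _ => (1:ℝ)) :
    spectraCone S = rowCone S ↔ RHC S := by
  obtain ⟨i₀, hi₀⟩ := h
  constructor
  · intro heq i j
    have hrow : S j ∈ rowCone S := by
      refine ⟨Pi.single j 1, ?_, ?_⟩
      · intro m
        by_cases hm : m = j <;> simp [hm, Pi.single_apply]
      · funext k
        simp only [Matrix.vecMul, dotProduct]
        rw [Finset.sum_eq_single j]
        · simp
        · intro m _ hm; simp [Pi.single_apply, hm]
        · simp
    rw [← heq, mem_spectraCone_iff S hS] at hrow
    have := hrow i
    obtain ⟨y, hy, hxy⟩ := this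
    exact ⟨y, hy, by rw [← hxy]; funext k; exact mul_comm _ _⟩
  · intro hR
    ext x
    rw [mem_spectraCone_iff S hS]
    constructor
    · intro hx
      have := hx i₀
      simpa [hi₀] using this
    · rintro ⟨y, hy, rfl⟩ i
      choose z hz hzeq using hR
      refine ⟨fun m => ∑ j, y j * z j i m, ?_, ?_⟩
      · intro m
        exact Finset.sum_nonneg fun j _ => mul_nonneg (hy j) (hz j i m)
      · funext k
        simp only [Matrix.vecMul, dotProduct]
        calc (∑ j, y j * S j k) * S i k
            = ∑ j, y j * (∑ m, z j i m * S m k) := by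
              rw [Finset.sum_mul]
              refine Finset.sum_congr rfl fun j _ => ?_
              have := congrFun (hzeq j i) k
              simp only [Matrix.vecMul, dotProduct] at this
              rw [mul_assoc, this]
          _ = ∑ j, ∑ m, y j * (z j i m * S m k) := by simp [Finset.mul_sum]
          _ = ∑ m, ∑ j, y j * (z j i m * S m k) := Finset.sum_comm
          _ = ∑ m, (∑ j, y j * z j i m) * S m k := by
              refine Finset.sum_congr rfl fun m _ => ?_
              rw [Finset.sum_mul]
              exact Finset.sum_congr rfl fun j _ => (mul_assoc _ _ _).symm
end

section
/- Let S ∈ GL(n, ℝ) and suppose some row of S equals the all-ones vector. Then C(S) = rc(S) if and only if every row r_i of S lies in C(S). -/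
open Matrix

theorem stmt17 {n : ℕ} (S : Matrix (Fin n) (Fin n) ℝ) (hS : IsUnit S)
    (h : ∃ i, S i = fun _ => (1:ℝ)) :
    spectraCone S = rowCone S ↔ ∀ i, S i ∈ spectraCone S := by
  obtain ⟨i₀, hi₀⟩ := h
  have hdet : IsUnit S.det := (Matrix.isUnit_iff_isUnit_det S).mp hS
  have key : ∀ (x : Fin n → ℝ) i j,
      (S * Matrix.diagonal x * S⁻¹) i j = ∑ m, S i m * x m * S⁻¹ m j := by
    intro x i j
    rw [Matrix.mul_apply]
    exact Finset.sum_congr rfl fun m _ => by rw [Matrix.mul_diagonal]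
  have hsub : spectraCone S ⊆ rowCone S := by
    intro x hx
    refine ⟨fun k => (S * Matrix.diagonal x * S⁻¹) i₀ k, fun k => hx i₀ k, ?_⟩
    have hAS : (S * Matrix.diagonal x * S⁻¹) * S = S * Matrix.diagonal x := by
      rw [Matrix.mul_assoc, Matrix.nonsing_inv_mul S hdet, Matrix.mul_one]
    funext j
    have h1 : ((S * Matrix.diagonal x * S⁻¹) * S) i₀ j = S i₀ j * x j := by
      rw [hAS, Matrix.mul_diagonal]
    have h2 : S i₀ j = 1 := by rw [hi₀]
    rw [h2, one_mul] at h1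
    rw [← h1]
    simp [Matrix.vecMul, Matrix.mul_apply, dotProduct]
  constructor
  · intro heq i
    rw [heq]
    refine ⟨Pi.single i 1, ?_, ?_⟩
    · intro k
      classical
      by_cases hk : k = i <;> simp [Pi.single_apply, hk]
    · funext j
      simp [Matrix.vecMul, dotProduct, Pi.single_apply]
  · intro hrows
    refine Set.Subset.antisymm hsub ?_
    rintro x ⟨y, hy, rfl⟩ i j
    rw [key]
    have hx : ∀ m, Matrix.vecMul y S m = ∑ k, y k * S k m := by
      intro m; simp [Matrix.vecMul, dotProduct]
    calc (0:ℝ) ≤ ∑ k, y k * ∑ m, S i m * S k m * S⁻¹ m j := by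
          refine Finset.sum_nonneg fun k _ => mul_nonneg (hy k) ?_
          rw [← key (S k) i j]
          exact hrows k i j
      _ = ∑ m, S i m * Matrix.vecMul y S m * S⁻¹ m j := by
          simp_rw [Finset.mul_sum]
          rw [Finset.sum_comm]
          refine Finset.sum_congr rfl fun m _ => ?_
          rw [hx, Finset.mul_sum, Finset.sum_mul]
          exact Finset.sum_congr rfl fun k _ => by ring
end
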